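/- arXiv:1707.03342 — 2 statements merged into one kernel-verified Lean document; each statement's English description precedes it below -/
import Mathlib

section
/- Let α < 0 < β, ε > 0, and let p < q with ℓ := q − p, and let ℓ_α, ℓ_β ∈ [0, ε/2] be the phase lengths of [p,q]. Assume ℓ − ℓ_α + ℓ_β ≤ 4/(β−α), and set v := −2/ℓ + (1/ℓ)∫_p^q g(s/ε) ds. Then the function n(x) := 1 + ∫_p^x (v − g(s/ε)) ds is nonincreasing on [p,q], satisfies n(q) = −1, and −1 ≤ n(x) ≤ 1 for every x ∈ [p,q]; in particular the edge [p,q] with endpoint values n(p) = 1, n(q) = −1 (a concave horizontal edge) is calibrable with velocity v. -/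
open MeasureTheory Set

/-- The 1-periodic forcing term: `α` within distance `1/4` of the integers, `β` otherwise. -/
noncomputable def g (α β x : ℝ) : ℝ := if |x - (round x : ℝ)| ≤ 1/4 then α else β

/-- The edge `[p,q]` with endpoint values `a`, `b` is calibrated with velocity `v` by the
Lipschitz field `n : [p,q] → [-1,1]` satisfying `n' = v - g(·/ε)` a.e. on `[p,q]`. -/
def Calibrates (α β ε p q a b v : ℝ) (n : ℝ → ℝ) : Prop :=
  (∃ K : NNReal, LipschitzOnWith K n (Icc p q)) ∧
  (∀ x ∈ Icc p q, n x ∈ Icc (-1 : ℝ) 1) ∧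
  n p = a ∧ n q = b ∧
  ∀ᵐ x ∂(volume.restrict (Icc p q)), HasDerivAt n (v - g α β (x / ε)) x


lemma g_eq_or (α β y : ℝ) : g α β y = α ∨ g α β y = β := by
  unfold g; split <;> simp

lemma round_eq_of_abs_lt {z : ℝ} {m : ℤ} (h : |z - m| < 1/2) : round z = m := by
  rw [round_eq, Int.floor_eq_iff]
  rw [abs_lt] at h
  constructor <;> push_cast <;> linarith [h.1, h.2]

lemma abs_sub_round_le_int (z : ℝ) (m : ℤ) : |z - round z| ≤ |z - m| := by
  rcases lt_or_ge (|z - m|) (1/2) with h | h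
  · rw [round_eq_of_abs_lt h]
  · exact (abs_sub_round z).trans h

lemma g_measurable (α β : ℝ) : Measurable (g α β) := by
  unfold g
  apply Measurable.ite _ measurable_const measurable_const
  have : Measurable fun z : ℝ => |z - (round z : ℝ)| := by
    apply (measurable_id.sub _).abs
    have : Measurable (round : ℝ → ℤ) := by
      have : (round : ℝ → ℤ) = fun z => ⌊z + 1/2⌋ := funext round_eq
      rw [this]; exact (measurable_id.add_const _).floor
    exact measurable_from_top.comp this
  exact measurableSet_le this measurable_const

lemma g_continuousAt {α β y : ℝ} (hy : |y - (round y : ℝ)| ≠ 1/4) :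
    ContinuousAt (g α β) y := by
  rcases lt_or_gt_of_ne hy with h | h
  · -- locally equal to α
    have : ∀ᶠ z in nhds y, g α β z = α := by
      have hδ : (0:ℝ) < 1/4 - |y - (round y : ℝ)| := by linarith
      filter_upwards [Metric.ball_mem_nhds y hδ] with z hz
      rw [Metric.mem_ball, Real.dist_eq] at hz
      have h1 : |z - (round y : ℝ)| ≤ |z - y| + |y - (round y : ℝ)| := by
        calc |z - (round y : ℝ)| = |(z - y) + (y - (round y:ℝ))| := by ring_nf
          _ ≤ _ := abs_add_le _ _
      have h2 : |z - (round y : ℝ)| < 1/2 := by linarith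
      have := round_eq_of_abs_lt h2
      unfold g; rw [this, if_pos (by linarith)]
    exact continuousAt_const.congr (Filter.EventuallyEq.symm this)
  · have : ∀ᶠ z in nhds y, g α β z = β := by
      have hδ : (0:ℝ) < |y - (round y : ℝ)| - 1/4 := by linarith
      filter_upwards [Metric.ball_mem_nhds y hδ] with z hz
      rw [Metric.mem_ball, Real.dist_eq] at hz
      have h1 : |y - (round y : ℝ)| ≤ |y - (round z : ℝ)| :=
        abs_sub_round_le_int y (round z)
      have h2 : |y - (round z : ℝ)| ≤ |y - z| + |z - (round z : ℝ)| := by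
        calc |y - (round z : ℝ)| = |(y - z) + (z - (round z:ℝ))| := by ring_nf
          _ ≤ _ := abs_add_le _ _
      have h3 : ¬ (|z - (round z : ℝ)| ≤ 1/4) := by
        rw [abs_sub_comm z y] at hz
        intro hc; linarith
      unfold g; rw [if_neg h3]
    exact continuousAt_const.congr (Filter.EventuallyEq.symm this)


theorem stmt3 (α β ε p q lα lβ v : ℝ) (hα : α < 0) (hβ : 0 < β) (hε0 : 0 < ε)
    (hpq : p < q)
    (hlα0 : 0 ≤ lα) (hlα1 : lα ≤ ε / 2) (hlβ0 : 0 ≤ lβ) (hlβ1 : lβ ≤ ε / 2)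
    (hsum : lα + lβ = (q - p) - ε * (⌊(q - p) / ε⌋ : ℝ))
    (hint : ∫ s in p..q, g α β (s / ε)
      = (α + β) / 2 * ((q - p) - lα - lβ) + α * lα + β * lβ)
    (hcond : (q - p) - lα + lβ ≤ 4 / (β - α))
    (hv : v = -2 / (q - p) + (1 / (q - p)) * ∫ s in p..q, g α β (s / ε))
    (n : ℝ → ℝ) (hn : n = fun x => 1 + ∫ s in p..x, (v - g α β (s / ε))) :
    AntitoneOn n (Icc p q) ∧ n q = -1 ∧ (∀ x ∈ Icc p q, -1 ≤ n x ∧ n x ≤ 1) ∧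
    Calibrates α β ε p q 1 (-1) v n := by
  have hℓ : (0:ℝ) < q - p := by linarith
  set f : ℝ → ℝ := fun s => v - g α β (s / ε) with hf
  set gg : ℝ → ℝ := fun s => g α β (s / ε) with hgg
  have hggmeas : Measurable gg := (g_measurable α β).comp (measurable_id.div_const ε)
  have hmeas : Measurable f := measurable_const.sub hggmeas
  set C : ℝ := |v| + (|α| + |β|) with hC
  have hC0 : 0 ≤ C := by positivity
  have hbound : ∀ s, ‖f s‖ ≤ C := by
    intro s
    simp only [hf, Real.norm_eq_abs, hC]
    have h1 : |g α β (s / ε)| ≤ |α| + |β| := by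
      rcases g_eq_or α β (s / ε) with h | h <;> rw [h]
      · exact le_add_of_nonneg_right (abs_nonneg β)
      · exact le_add_of_nonneg_left (abs_nonneg α)
    calc |v - g α β (s / ε)| ≤ |v| + |g α β (s / ε)| := abs_sub _ _
      _ ≤ |v| + (|α| + |β|) := by linarith
  have hInt : ∀ a b : ℝ, IntervalIntegrable f volume a b := by
    intro a b
    rw [intervalIntegrable_iff]
    exact Measure.integrableOn_of_bounded measure_Ioc_lt_top.ne
      hmeas.aestronglyMeasurable (ae_of_all _ hbound)
  have hIntg : ∀ a b : ℝ, IntervalIntegrable gg volume a b := by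
    intro a b
    rw [intervalIntegrable_iff]
    refine Measure.integrableOn_of_bounded (M := |α| + |β|) measure_Ioc_lt_top.ne
      hggmeas.aestronglyMeasurable (ae_of_all _ fun s => ?_)
    simp only [hgg, Real.norm_eq_abs]
    rcases g_eq_or α β (s / ε) with h | h <;> rw [h]
    · exact le_add_of_nonneg_right (abs_nonneg β)
    · exact le_add_of_nonneg_left (abs_nonneg α)
  -- key inequality: v ≤ α
  have hβα : (0:ℝ) < β - α := by linarith
  have h4 : ((q - p) - lα + lβ) * (β - α) ≤ 4 := (le_div_iff₀ hβα).mp hcond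
  have hvmul : v * (q - p) = -2 + ((α + β) / 2 * ((q - p) - lα - lβ) + α * lα + β * lβ) := by
    rw [hv, hint]; field_simp
  have hvα : v ≤ α := by nlinarith [hvmul, h4, hℓ]
  have hfnonpos : ∀ s, f s ≤ 0 := by
    intro s
    rcases g_eq_or α β (s / ε) with h | h <;> simp only [hf, h] <;> linarith
  -- n b = n a + ∫ a..b f
  have hsplit : ∀ a b : ℝ, n b = n a + ∫ s in a..b, f s := by
    intro a b
    rw [hn]
    simp only
    rw [← intervalIntegral.integral_add_adjacent_intervals (hInt p a) (hInt a b)]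
    ring
  have hnp : n p = 1 := by rw [hn]; simp
  have hnq : n q = -1 := by
    rw [hn]
    simp only
    rw [hf, intervalIntegral.integral_sub (intervalIntegrable_const) (hIntg p q),
      intervalIntegral.integral_const, ← hgg, smul_eq_mul]
    have h2 : (∫ s in p..q, gg s) = (α + β) / 2 * ((q - p) - lα - lβ) + α * lα + β * lβ := hint
    rw [h2]
    nlinarith [hvmul]
  have hanti : AntitoneOn n (Icc p q) := by
    intro a _ b _ hab
    rw [hsplit a b]
    have : 0 ≤ ∫ s in a..b, (-f s) :=
      intervalIntegral.integral_nonneg hab fun u _ => neg_nonneg.2 (hfnonpos u)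
    rw [intervalIntegral.integral_neg] at this
    linarith
  have hbounds : ∀ x ∈ Icc p q, -1 ≤ n x ∧ n x ≤ 1 := by
    intro x hx
    have h1 := hanti hx (right_mem_Icc.2 hpq.le) hx.2
    have h2 := hanti (left_mem_Icc.2 hpq.le) hx hx.1
    rw [hnq] at h1; rw [hnp] at h2
    exact ⟨h1, h2⟩
  refine ⟨hanti, hnq, hbounds, ⟨?_, fun x hx => hbounds x hx, hnp, hnq, ?_⟩⟩
  · refine ⟨C.toNNReal, LipschitzOnWith.of_dist_le_mul fun x _ y _ => ?_⟩
    rw [Real.coe_toNNReal _ hC0, Real.dist_eq, Real.dist_eq]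
    have : n x - n y = ∫ s in y..x, f s := by rw [hsplit y x]; ring
    rw [this]
    have hle := intervalIntegral.norm_integral_le_of_norm_le_const
      (f := f) (a := y) (b := x) (C := C) fun u _ => hbound u
    rw [Real.norm_eq_abs] at hle
    exact hle
  · -- a.e. derivative
    have hBc : Set.Countable {x : ℝ | |x / ε - (round (x / ε) : ℝ)| = 1/4} := by
      apply Set.Countable.mono ?_ (Set.countable_range
        (fun z : ℤ × Bool => ε * ((z.1 : ℝ) + if z.2 then 1/4 else -(1/4))))
      intro x hx
      rcases (abs_eq (by norm_num : (0:ℝ) ≤ 1/4)).1 hx with h | h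
      · exact ⟨(round (x / ε), true), by simp; field_simp at h ⊢; linarith⟩
      · exact ⟨(round (x / ε), false), by simp; field_simp at h ⊢; linarith⟩
    have hae : ∀ᵐ x ∂(volume : Measure ℝ), |x / ε - (round (x / ε) : ℝ)| ≠ 1/4 := by
      rw [ae_iff]
      simpa using hBc.measure_zero _
    refine ae_restrict_of_ae ?_
    filter_upwards [hae] with x hx
    have hc : ContinuousAt f x := by
      apply continuousAt_const.sub
      have h1 : ContinuousAt (fun s : ℝ => s / ε) x :=
        (continuousAt_id (x := x)).div_const ε
      exact ContinuousAt.comp (f := fun s : ℝ => s / ε) (x := x)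
        (g_continuousAt hx) h1
    have hd := intervalIntegral.integral_hasDerivAt_right (hInt p x)
      (hmeas.stronglyMeasurable.stronglyMeasurableAtFilter) hc
    rw [hn]
    exact hd.const_add 1
end

section
/- Let α < 0 < β, 0 < ε < 8/(β−α), and let p < q with ℓ := q − p ≥ ε, p ∈ ε(3/4 + ℤ) and q ∈ ε(1/4 + ℤ). Set v := 2/ℓ + (α+β)/2 − (β−α)ε/(4ℓ). Then the function n(x) := −1 + ∫_p^x (v − g(s/ε)) ds satisfies n(q) = 1 and −1 ≤ n(x) ≤ 1 for every x ∈ [p,q]; in particular the edge [p,q] with endpoint values n(p) = −1, n(q) = 1 (a convex horizontal edge with left endpoint on εI_{β,α} and right endpoint on εI_{α,β}) is calibrable with velocity v. -/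
open MeasureTheory Set

/-!
Subtracting the mean `(α + β) / 2` of `g` splits the field into a linear part and an oscillation:
`n x = -1 + (v - (α + β) / 2) (x - p) - ε G (x / ε)`, where `G = centeredPrimitive α β`, the
primitive of `g - (α + β) / 2` vanishing at `3/4`, is a 1-periodic tent with values in
`[-(β - α) / 4, 0]`, zero on `3/4 + ℤ` and minimal on `1/4 + ℤ`. The choice of `v` makes the
linear part rise by exactly `2 - (β - α) ε / 4` over `[p, q]`, which is nonnegative because
`ε (β - α) < 8`; the tent then adds at most `(β - α) ε / 4`, attained at `q`. So `n` stays in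
`[-1, 1]` and reaches `1` at `q`.
-/

open Function

lemma locallyIntegrable_of_norm_le {X E : Type*} [MeasurableSpace X] [TopologicalSpace X]
    [NormedAddCommGroup E] {μ : Measure X} [IsLocallyFiniteMeasure μ] {f : X → E}
    (hf : AEStronglyMeasurable f μ) {C : ℝ} (hC : ∀ x, ‖f x‖ ≤ C) : LocallyIntegrable f μ :=
  (locallyIntegrable_const C).mono hf (ae_of_all _ fun x => (hC x).trans (Real.le_norm_self C))

lemma MeasureTheory.LocallyIntegrable.intervalIntegrable {E : Type*} [NormedAddCommGroup E]
    {f : ℝ → E} (hf : LocallyIntegrable f volume) (a b : ℝ) : IntervalIntegrable f volume a b :=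
  (hf.integrableOn_isCompact isCompact_uIcc).intervalIntegrable

lemma lipschitzWith_intervalIntegral_of_norm_le {E : Type*} [NormedAddCommGroup E]
    [NormedSpace ℝ E] {f : ℝ → E} (hf : LocallyIntegrable f volume) {C : NNReal}
    (hC : ∀ x, ‖f x‖ ≤ C) (a : ℝ) : LipschitzWith C fun x => ∫ t in a..x, f t :=
  LipschitzWith.of_dist_le_mul fun x y => by
    rw [dist_eq_norm, intervalIntegral.integral_interval_sub_left (hf.intervalIntegrable a x)
      (hf.intervalIntegrable a y), Real.dist_eq]
    exact intervalIntegral.norm_integral_le_of_norm_le_const fun t _ => hC t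

section Forcing

variable (α β : ℝ)

lemma g_periodic : Periodic (g α β) 1 := fun x => by
  simp only [g, round_add_one, Int.cast_add, Int.cast_one, add_sub_add_right_eq_sub]

lemma g_of_abs_sub_int_le {t : ℝ} (k : ℤ) (h : |t - k| ≤ 1 / 4) : g α β t = α :=
  if_pos ((round_le t k).trans h)

lemma g_of_mem_Ioo {t : ℝ} (ht : t ∈ Ioo (5 / 4 : ℝ) (7 / 4)) : g α β t = β := by
  refine if_neg fun h => ?_
  rw [abs_le] at h
  have h1 : (1 : ℝ) < round t := by linarith [ht.1]
  have h2 : (round t : ℝ) < 2 := by linarith [ht.2]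
  norm_cast at h1 h2
  omega

lemma measurable_g : Measurable (g α β) := by
  have hround : Measurable fun x : ℝ => (round x : ℝ) := by
    simp only [round_eq]
    exact measurable_from_top.comp (Int.measurable_floor.comp (measurable_id.add_const _))
  exact Measurable.ite (measurableSet_le ((measurable_id.sub hround).abs) measurable_const)
    measurable_const measurable_const

lemma abs_g_le (t : ℝ) : |g α β t| ≤ |α| + |β| := by
  unfold g
  split <;> linarith [abs_nonneg α, abs_nonneg β]

lemma locallyIntegrable_g : LocallyIntegrable (g α β) volume :=
  locallyIntegrable_of_norm_le (measurable_g α β).aestronglyMeasurable (abs_g_le α β)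

noncomputable def centeredPrimitive (t : ℝ) : ℝ :=
  ∫ s in (3 / 4 : ℝ)..t, (g α β s - (α + β) / 2)

lemma intervalIntegrable_g_sub_const (c a b : ℝ) :
    IntervalIntegrable (fun s => g α β s - c) volume a b :=
  ((locallyIntegrable_g α β).intervalIntegrable a b).sub intervalIntegrable_const

lemma centeredPrimitive_of_mem_Icc_left {t : ℝ} (ht : t ∈ Icc (3 / 4 : ℝ) (5 / 4)) :
    centeredPrimitive α β t = -(β - α) / 2 * (t - 3 / 4) := by
  rw [centeredPrimitive, intervalIntegral.integral_congr (g := fun _ => α - (α + β) / 2),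
    intervalIntegral.integral_const, smul_eq_mul]
  · ring
  · intro s hs
    rw [uIcc_of_le ht.1] at hs
    dsimp only
    rw [g_of_abs_sub_int_le α β 1 (abs_le.2 ⟨by push_cast; linarith [hs.1],
      by push_cast; linarith [hs.2, ht.2]⟩)]

lemma centeredPrimitive_of_mem_Icc_right {t : ℝ} (ht : t ∈ Icc (5 / 4 : ℝ) (7 / 4)) :
    centeredPrimitive α β t = -(β - α) / 2 * (7 / 4 - t) := by
  have hplateau :
      ∫ s in (5 / 4 : ℝ)..t, (g α β s - (α + β) / 2) = (t - 5 / 4) * ((β - α) / 2) := by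
    rw [intervalIntegral.integral_congr_ae (g := fun _ => β - (α + β) / 2),
      intervalIntegral.integral_const, smul_eq_mul]
    · ring
    · have hne : ∀ᵐ s : ℝ, s ≠ 7 / 4 := by simp [ae_iff, measure_singleton]
      filter_upwards [hne] with s hs hst
      rw [uIoc_of_le ht.1] at hst
      rw [g_of_mem_Ioo α β ⟨hst.1, lt_of_le_of_ne (hst.2.trans ht.2) hs⟩]
  rw [centeredPrimitive, ← intervalIntegral.integral_add_adjacent_intervals
    (intervalIntegrable_g_sub_const α β _ _ (5 / 4)) (intervalIntegrable_g_sub_const α β _ _ _),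
    ← centeredPrimitive, centeredPrimitive_of_mem_Icc_left α β ⟨by norm_num, le_rfl⟩, hplateau]
  ring

lemma centeredPrimitive_periodic : Periodic (centeredPrimitive α β) 1 := fun t => by
  have hper : Periodic (fun s => g α β s - (α + β) / 2) 1 := fun s => by
    simp only [g_periodic α β s]
  rw [centeredPrimitive,
    hper.intervalIntegral_add_eq_add _ _ (intervalIntegrable_g_sub_const α β _),
    ← centeredPrimitive, ← centeredPrimitive,
    centeredPrimitive_of_mem_Icc_right α β (t := 3 / 4 + 1) ⟨by norm_num, by norm_num⟩]
  ring

lemma centeredPrimitive_mem_Icc (hαβ : α ≤ β) (t : ℝ) :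
    centeredPrimitive α β t ∈ Icc (-(β - α) / 4) 0 := by
  obtain ⟨y, ⟨hy₁, hy₂⟩, hty⟩ :=
    (centeredPrimitive_periodic α β).exists_mem_Ico one_pos t (3 / 4)
  rw [hty]
  rcases le_total y (5 / 4) with hy | hy
  · rw [centeredPrimitive_of_mem_Icc_left α β ⟨hy₁, hy⟩]
    constructor <;> nlinarith
  · rw [centeredPrimitive_of_mem_Icc_right α β ⟨hy, by linarith⟩]
    constructor <;> nlinarith

lemma centeredPrimitive_three_quarters_add_int (k : ℤ) :
    centeredPrimitive α β (3 / 4 + k) = 0 := by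
  rw [← mul_one (k : ℝ), (centeredPrimitive_periodic α β).int_mul k (3 / 4),
    centeredPrimitive_of_mem_Icc_left α β ⟨le_rfl, by norm_num⟩]
  ring

lemma centeredPrimitive_one_quarter_add_int (k : ℤ) :
    centeredPrimitive α β (1 / 4 + k) = -(β - α) / 4 := by
  have h := (centeredPrimitive_periodic α β).int_mul (k - 1) (5 / 4)
  push_cast at h
  rw [show (1 / 4 : ℝ) + k = 5 / 4 + (k - 1) * 1 by ring, h,
    centeredPrimitive_of_mem_Icc_left α β ⟨by norm_num, le_rfl⟩]
  ring

lemma integral_sub_g_div {ε : ℝ} (hε : ε ≠ 0) (v a b : ℝ) :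
    ∫ s in a..b, (v - g α β (s / ε)) =
      (v - (α + β) / 2) * (b - a) -
        ε * (centeredPrimitive α β (b / ε) - centeredPrimitive α β (a / ε)) := by
  have hsplit : ∀ u, v - g α β u = (v - (α + β) / 2) - (g α β u - (α + β) / 2) :=
    fun u => by ring
  rw [intervalIntegral.integral_comp_div (fun u => v - g α β u) hε]
  simp only [hsplit]
  rw [intervalIntegral.integral_sub intervalIntegrable_const
      (intervalIntegrable_g_sub_const α β _ _ _),
    intervalIntegral.integral_const, smul_eq_mul, centeredPrimitive, centeredPrimitive,
    intervalIntegral.integral_interval_sub_left (intervalIntegrable_g_sub_const α β _ _ _)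
      (intervalIntegrable_g_sub_const α β _ _ _), smul_eq_mul]
  field_simp

lemma norm_sub_g_le (v t : ℝ) : ‖v - g α β t‖ ≤ ↑(‖v‖₊ + ‖α‖₊ + ‖β‖₊) := by
  have h := norm_sub_le v (g α β t)
  push_cast
  simp only [Real.norm_eq_abs] at h ⊢
  linarith [abs_g_le α β t]

lemma locallyIntegrable_sub_g_div (v ε : ℝ) :
    LocallyIntegrable (fun s => v - g α β (s / ε)) volume :=
  locallyIntegrable_of_norm_le
    (((measurable_g α β).comp (measurable_id.div_const ε)).const_sub v).aestronglyMeasurable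
    fun s => norm_sub_g_le α β v (s / ε)

end Forcing

lemma calibrates_of_eq_primitive {α β ε p q c v : ℝ} {n : ℝ → ℝ}
    (hn : n = fun x => c + ∫ s in p..x, (v - g α β (s / ε)))
    (hbounds : ∀ x ∈ Icc p q, n x ∈ Icc (-1 : ℝ) 1) :
    Calibrates α β ε p q (n p) (n q) v n := by
  have hlip : LipschitzWith (0 + (‖v‖₊ + ‖α‖₊ + ‖β‖₊)) n := by
    rw [hn]
    exact (LipschitzWith.const c).add (lipschitzWith_intervalIntegral_of_norm_le
      (locallyIntegrable_sub_g_div α β v ε) (fun s => norm_sub_g_le α β v (s / ε)) p)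
  refine ⟨⟨_, hlip.lipschitzOnWith⟩, hbounds, rfl, rfl, ?_⟩
  filter_upwards [ae_restrict_of_ae
    (LocallyIntegrable.ae_hasDerivAt_integral (locallyIntegrable_sub_g_div α β v ε))] with x hx
  rw [hn]
  exact (hx p).const_add c

theorem stmt4_general (α β ε p q v : ℝ)
    (hε0 : 0 < ε) (hε : ε < 8 / (β - α)) (hpq : p < q)
    (hp : ∃ k : ℤ, p = ε * (3/4 + k)) (hq : ∃ k : ℤ, q = ε * (1/4 + k))
    (hv : v = 2 / (q - p) + (α + β) / 2 - (β - α) * ε / (4 * (q - p)))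
    (n : ℝ → ℝ) (hn : n = fun x => -1 + ∫ s in p..x, (v - g α β (s / ε))) :
    n q = 1 ∧ (∀ x ∈ Icc p q, -1 ≤ n x ∧ n x ≤ 1) ∧
    Calibrates α β ε p q (-1) 1 v n := by
  obtain ⟨kp, hkp⟩ := hp
  obtain ⟨kq, hkq⟩ := hq
  have hαβ : α < β := sub_pos.mp ((div_pos_iff_of_pos_left (by norm_num)).mp (hε0.trans hε))
  set a := v - (α + β) / 2 with ha_def
  have ha : a * (q - p) = 2 - (β - α) * ε / 4 := by
    rw [ha_def, hv]
    field_simp [(sub_pos.2 hpq).ne']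
    ring
  have ha0 : 0 ≤ a := by
    refine nonneg_of_mul_nonneg_left (b := q - p) ?_ (sub_pos.2 hpq)
    rw [ha, sub_nonneg]
    linarith [(lt_div_iff₀ (sub_pos.2 hαβ)).mp hε]
  have hn_eq : ∀ x, n x = -1 + a * (x - p) - ε * centeredPrimitive α β (x / ε) := fun x => by
    simp only [hn]
    rw [integral_sub_g_div α β hε0.ne', hkp, mul_div_cancel_left₀ _ hε0.ne',
      centeredPrimitive_three_quarters_add_int]
    ring
  have hnq : n q = 1 := by
    rw [hn_eq, hkq, mul_div_cancel_left₀ _ hε0.ne', centeredPrimitive_one_quarter_add_int, ← hkq]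
    linarith
  have hbounds : ∀ x ∈ Icc p q, -1 ≤ n x ∧ n x ≤ 1 := by
    rintro x ⟨hpx, hxq⟩
    obtain ⟨hlo, hhi⟩ := centeredPrimitive_mem_Icc α β hαβ.le (x / ε)
    have hax : a * (x - p) ≤ a * (q - p) := mul_le_mul_of_nonneg_left (by linarith) ha0
    rw [hn_eq]
    constructor <;> nlinarith [mul_nonneg ha0 (sub_nonneg.2 hpx)]
  have hnp : n p = -1 := by simp [hn]
  refine ⟨hnq, hbounds, ?_⟩
  simpa only [hnp, hnq] using calibrates_of_eq_primitive hn hbounds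

theorem stmt4 (α β ε p q v : ℝ) (hα : α < 0) (hβ : 0 < β)
    (hε0 : 0 < ε) (hε : ε < 8 / (β - α)) (hpq : p < q) (hl : ε ≤ q - p)
    (hp : ∃ k : ℤ, p = ε * (3/4 + k)) (hq : ∃ k : ℤ, q = ε * (1/4 + k))
    (hv : v = 2 / (q - p) + (α + β) / 2 - (β - α) * ε / (4 * (q - p)))
    (n : ℝ → ℝ) (hn : n = fun x => -1 + ∫ s in p..x, (v - g α β (s / ε))) :
    n q = 1 ∧ (∀ x ∈ Icc p q, -1 ≤ n x ∧ n x ≤ 1) ∧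
    Calibrates α β ε p q (-1) 1 v n :=
  stmt4_general α β ε p q v hε0 hε hpq hp hq hv n hn
end
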